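/- (Correctness of the reduction to a single weighted string) Let X_1,…,X_n be an SLP representing T = val(X_n), let q ≥ 2, and let i_1 < … < i_m be exactly those indices i for which X_i = X_ℓ X_r and |val(X_i)| ≥ q. Let z = t_{i_1}·t_{i_2}·…·t_{i_m}, and define weights w : {1,…,|z|} → ℕ blockwise: if position p of z is the s-th position of the block t_{i_j} (1 ≤ s ≤ |t_{i_j}|), then w(p) = vOcc(X_{i_j}) if s ≤ |t_{i_j}| − q + 1, and w(p) = 0 otherwise. Then for every q-gram P ∈ Σ^q, |Occ(T, P)| = Σ_{k ∈ Occ(z, P)} w(k). -/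

import Mathlib

/-!
For `X_i = X_ℓ X_r`, an occurrence of the `q`-gram `P` in `val(X_i)` lies inside `val(X_ℓ)`,
lies inside `val(X_r)`, or crosses the boundary, and the crossing ones are exactly the
occurrences of `P` in `t_i`, shifted by `|val(X_ℓ)| - (q - 1)`. Unfolding this recursion from
`X_n`, and using `q ≥ 2` at the terminals, gives `|Occ(T, P)| = Σ_k vOcc(X_k) · |Occ(t_k, P)|`,
since `vOcc(X_k)` is the number of nodes labelled `X_k` in the derivation tree of `T`.
Splitting `Occ(z, P)` block by block in the same way shows that the `w`-weighted count is
`Σ_j vOcc(X_{i_j}) · |Occ(t_{i_j}, P)|`: an occurrence starting in the block `t_{i_j}` lies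
inside it exactly when its offset is at most `|t_{i_j}| - q + 1`, and otherwise has weight `0`.
The two sums agree because every other `k` has `|t_k| < q`.
-/

/-- The substring `S[u:v]` (1-indexed, inclusive; empty if `v < u`). -/
def substr {α : Type*} (S : List α) (u v : ℕ) : List α := (S.drop (u - 1)).take (v + 1 - u)

/-- `pre(S,q) = S[1:min(q,|S|)]`, the length-`q` prefix of `S`. -/
def pre {α : Type*} (S : List α) (q : ℕ) : List α := S.take q

/-- `suf(S,q) = S[max(1,|S|-q+1):|S|]`, the length-`q` suffix of `S`. -/
def suf {α : Type*} (S : List α) (q : ℕ) : List α := S.drop (S.length - q)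

/-- `Occ(T,P) = {k ≥ 1 : T[k:k+|P|-1] = P}`. -/
def Occ {α : Type*} (T P : List α) : Set ℕ := {k | 1 ≤ k ∧ substr T k (k + P.length - 1) = P}

/-- A straight-line program of size `n`: each variable `X_i` (0-indexed here) is either a
terminal `a ∈ Σ` or a concatenation `X_ℓ X_r` with `ℓ, r < i`. -/
structure SLP (α : Type*) (n : ℕ) where
  rule : Fin n → α ⊕ (Fin n × Fin n)
  wf : ∀ i l r, rule i = Sum.inr (l, r) → l < i ∧ r < i

namespace SLP

variable {α : Type*} {n : ℕ}

/-- The string `val(X_i)` derived by variable `X_i`. -/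
def val (S : SLP α n) : Fin n → List α
  | i =>
    match h : S.rule i with
    | Sum.inl a => [a]
    | Sum.inr (l, r) => S.val l ++ S.val r
termination_by i => i.val
decreasing_by
  · exact (S.wf i l r h).1
  · exact (S.wf i l r h).2

/-- The set `itv(X_i)` of occurrence intervals of `X_i` in the derivation of `T = val(X_n)`. -/
def itv (S : SLP α n) : Fin n → Set (ℕ × ℕ)
  | i =>
    if i.val = n - 1 then {(1, (S.val i).length)}
    else
      {p | ∃ k l, ∃ h : S.rule k = Sum.inr (l, i),
          ∃ uv ∈ S.itv k, p = (uv.1 + (S.val l).length, uv.2)} ∪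
      {p | ∃ k r, ∃ h : S.rule k = Sum.inr (i, r),
          ∃ uv ∈ S.itv k, p = (uv.1, uv.1 + (S.val i).length - 1)}
termination_by i => n - i.val
decreasing_by
  · have h1 : (i : ℕ) < (k : ℕ) := (S.wf k l i h).2
    have h2 : (k : ℕ) < n := k.isLt
    omega
  · have h1 : (i : ℕ) < (k : ℕ) := (S.wf k i r h).1
    have h2 : (k : ℕ) < n := k.isLt
    omega

/-- `vOcc(X_i) = |itv(X_i)|`. -/
noncomputable def vOcc (S : SLP α n) (i : Fin n) : ℕ := (S.itv i).ncard

end SLP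

namespace SLP

/-- For a concatenation variable `X_i = X_ℓ X_r`, the string
`t_i = suf(val(X_ℓ), q-1) · pre(val(X_r), q-1)` (and `[]` for terminal variables). -/
def tstr {α : Type*} {n : ℕ} (S : SLP α n) (q : ℕ) (i : Fin n) : List α :=
  match S.rule i with
  | Sum.inl _ => []
  | Sum.inr (l, r) => suf (S.val l) (q - 1) ++ pre (S.val r) (q - 1)

end SLP

namespace SLP

/-- The indices `i_1 < … < i_m`: exactly those `i` with `X_i = X_ℓ X_r` and `|val(X_i)| ≥ q`,
in increasing order. -/
def idxs {α : Type*} {n : ℕ} (S : SLP α n) (q : ℕ) : List (Fin n) :=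
  (List.finRange n).filter (fun i => (S.rule i).isRight && decide (q ≤ (S.val i).length))

/-- The string `z = t_{i_1} · t_{i_2} · … · t_{i_m}`. -/
def zstr {α : Type*} {n : ℕ} (S : SLP α n) (q : ℕ) : List α :=
  ((S.idxs q).map (S.tstr q)).flatten

/-- The list of weights of the positions of `z`, blockwise: the `s`-th position of the block
`t_{i_j}` has weight `vOcc(X_{i_j})` if `s ≤ |t_{i_j}| - q + 1`, and `0` otherwise. -/
noncomputable def wlist {α : Type*} {n : ℕ} (S : SLP α n) (q : ℕ) : List ℕ :=
  ((S.idxs q).map (fun i =>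
    (List.range (S.tstr q i).length).map
      (fun s => if s + 1 ≤ (S.tstr q i).length + 1 - q then S.vOcc i else 0))).flatten

/-- The weight `w(p)` of position `p` (1-indexed) of `z`. -/
noncomputable def wfun {α : Type*} {n : ℕ} (S : SLP α n) (q p : ℕ) : ℕ :=
  (S.wlist q).getD (p - 1) 0

end SLP
section Occurrences

variable {α : Type*} {A B C T P : List α} {p : ℕ}

lemma mem_Occ_iff : p ∈ Occ T P ↔ 1 ≤ p ∧ (T.drop (p - 1)).take P.length = P := by
  refine and_congr_right fun hp => ?_
  rw [substr, show p + P.length - 1 + 1 - p = P.length by omega]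

lemma Occ_bounds (hP : P ≠ []) (h : p ∈ Occ T P) :
    1 ≤ p ∧ p + P.length ≤ T.length + 1 := by
  obtain ⟨hp, htake⟩ := mem_Occ_iff.mp h
  have hlen := congrArg List.length htake
  have hP' := List.length_pos_iff.mpr hP
  simp only [List.length_take, List.length_drop] at hlen
  omega

lemma Occ_finite (hP : P ≠ []) : (Occ T P).Finite :=
  (Set.finite_Icc 1 T.length).subset fun p hp => by
    have := Occ_bounds hP hp
    have := List.length_pos_iff.mpr hP
    exact ⟨by omega, by omega⟩

lemma Occ_eq_empty_of_length_lt (h : T.length < P.length) : Occ T P = ∅ :=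
  Set.eq_empty_of_forall_notMem fun p hp => by
    have := Occ_bounds (List.ne_nil_of_length_pos (by omega)) hp
    omega

lemma mem_Occ_append_left_iff (h : p + P.length ≤ A.length + 1) :
    p ∈ Occ (A ++ B) P ↔ p ∈ Occ A P := by
  simp only [mem_Occ_iff]
  refine and_congr_right fun hp => ?_
  rw [List.drop_append_of_le_length (by omega),
    List.take_append_of_le_length (by rw [List.length_drop]; omega)]

lemma add_length_mem_Occ_append_iff (hp : 1 ≤ p) :
    p + A.length ∈ Occ (A ++ B) P ↔ p ∈ Occ B P := by
  simp only [mem_Occ_iff, hp, true_and, show 1 ≤ p + A.length by omega]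
  rw [show p + A.length - 1 = A.length + (p - 1) by omega, List.drop_append,
    List.drop_eq_nil_of_le (by omega), List.nil_append, Nat.add_sub_cancel_left]

lemma add_length_mem_Occ_append_append_iff (hp : 1 ≤ p) (h : p + P.length ≤ C.length + 1) :
    p + A.length ∈ Occ (A ++ C ++ B) P ↔ p ∈ Occ C P := by
  rw [List.append_assoc, add_length_mem_Occ_append_iff hp, mem_Occ_append_left_iff h]

end Occurrences

section Crossing

variable {α : Type*} {A B P : List α}

def crossingOcc (A B P : List α) : Set ℕ :=
  {p | p ∈ Occ (A ++ B) P ∧ p ≤ A.length ∧ A.length + 1 < p + P.length}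

lemma crossingOcc_eq_image (hP : P ≠ []) :
    crossingOcc A B P = (· + (A.length - (P.length - 1))) ''
      Occ (suf A (P.length - 1) ++ pre B (P.length - 1)) P := by
  obtain ⟨m, hm⟩ : ∃ m, m = P.length - 1 := ⟨_, rfl⟩
  obtain ⟨d, hd⟩ : ∃ d, d = A.length - m := ⟨_, rfl⟩
  rw [← hm, ← hd]
  have hsplit : A ++ B = A.take d ++ (suf A m ++ pre B m) ++ B.drop m := by
    conv_lhs => rw [← List.take_append_drop d A, ← List.take_append_drop m B]
    simp only [suf, pre, hd, List.append_assoc]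
  have htake : (A.take d).length = d := by simp [hd]
  have ht : (suf A m ++ pre B m).length = (A.length - d) + min m B.length := by
    simp [suf, pre, hd]
  have hPlen := List.length_pos_iff.mpr hP
  ext p
  constructor
  · rintro ⟨hocc, hpA, hcross⟩
    have hb := Occ_bounds hP hocc
    rw [List.length_append] at hb
    refine ⟨p - d, ?_, Nat.sub_add_cancel (by omega)⟩
    rw [hsplit] at hocc
    have := add_length_mem_Occ_append_append_iff (A := A.take d) (C := suf A m ++ pre B m)
      (B := B.drop m) (P := P) (by omega : 1 ≤ p - d) (by omega)
    rw [htake, Nat.sub_add_cancel (by omega)] at this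
    exact this.mp hocc
  · rintro ⟨s, hs, rfl⟩
    dsimp only
    have hb := Occ_bounds hP hs
    have hmem := (add_length_mem_Occ_append_append_iff (A := A.take d) (B := B.drop m)
      hb.1 (by omega)).mpr hs
    rw [htake, ← hsplit] at hmem
    exact ⟨hmem, by omega, by omega⟩

lemma Occ_append_eq_union (hP : P ≠ []) :
    Occ (A ++ B) P = Occ A P ∪ crossingOcc A B P ∪ (· + A.length) '' Occ B P := by
  ext p
  constructor
  · intro h
    by_cases hl : p + P.length ≤ A.length + 1
    · exact Or.inl (Or.inl ((mem_Occ_append_left_iff hl).mp h))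
    by_cases hr : A.length < p
    · refine Or.inr ⟨p - A.length, (add_length_mem_Occ_append_iff (A := A) (by omega)).mp ?_,
        Nat.sub_add_cancel hr.le⟩
      rwa [Nat.sub_add_cancel hr.le]
    · exact Or.inl (Or.inr ⟨h, by omega, by omega⟩)
  · rintro ((h | h) | ⟨s, hs, rfl⟩)
    · exact (mem_Occ_append_left_iff (Occ_bounds hP h).2).mpr h
    · exact h.1
    · exact (add_length_mem_Occ_append_iff (Occ_bounds hP hs).1).mpr hs

lemma finsum_mem_Occ_append {M : Type*} [AddCommMonoid M] (hP : P ≠ []) (f : ℕ → M) :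
    ∑ᶠ p ∈ Occ (A ++ B) P, f p =
      ∑ᶠ p ∈ Occ A P, f p + ∑ᶠ p ∈ crossingOcc A B P, f p +
        ∑ᶠ p ∈ Occ B P, f (p + A.length) := by
  have hPlen := List.length_pos_iff.mpr hP
  have hcross_fin : (crossingOcc A B P).Finite := (Occ_finite hP).subset fun p hp => hp.1
  have hdisj_left : Disjoint (Occ A P) (crossingOcc A B P) :=
    Set.disjoint_left.mpr fun p hA hX => by have := Occ_bounds hP hA; have := hX.2.2; omega
  have hdisj_right : Disjoint (Occ A P ∪ crossingOcc A B P) ((· + A.length) '' Occ B P) := by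
    rintro X hXl hXr p hpX
    obtain ⟨s, hs, hsp⟩ := hXr hpX
    dsimp only at hsp
    have := (Occ_bounds hP hs).1
    rcases hXl hpX with hA | hX
    · have := Occ_bounds hP hA; omega
    · have := hX.2.1; omega
  rw [Occ_append_eq_union hP, finsum_mem_union hdisj_right
      ((Occ_finite hP).union hcross_fin) ((Occ_finite hP).image _),
    finsum_mem_union hdisj_left (Occ_finite hP) hcross_fin,
    finsum_mem_image (add_left_injective _).injOn]

lemma ncard_Occ_append (hP : P ≠ []) :
    (Occ (A ++ B) P).ncard = (Occ A P).ncard +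
      (Occ (suf A (P.length - 1) ++ pre B (P.length - 1)) P).ncard + (Occ B P).ncard := by
  have := finsum_mem_Occ_append (A := A) (B := B) hP fun _ => 1
  rwa [finsum_one, finsum_one, finsum_one, finsum_one, crossingOcc_eq_image hP,
    Set.ncard_image_of_injective _ (add_left_injective _)] at this

end Crossing

section WeightedBlocks

variable {α : Type*} {P : List α}

def blockWeights (q : ℕ) (C : List α) (c : ℕ) : List ℕ :=
  (List.range C.length).map fun s => if s + 1 ≤ C.length + 1 - q then c else 0

lemma finsum_mem_Occ_append_blockWeights (hP : P ≠ []) (C D : List α) (c : ℕ) (W : List ℕ) :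
    ∑ᶠ p ∈ Occ (C ++ D) P, (blockWeights P.length C c ++ W).getD (p - 1) 0 =
      c * (Occ C P).ncard + ∑ᶠ p ∈ Occ D P, W.getD (p - 1) 0 := by
  have hlen : (blockWeights P.length C c).length = C.length := by simp [blockWeights]
  have hblock : ∀ p, 1 ≤ p → p ≤ C.length →
      (blockWeights P.length C c ++ W).getD (p - 1) 0 =
        if p + P.length ≤ C.length + 1 then c else 0 := by
    intro p hp1 hpC
    rw [List.getD_append _ _ _ _ (by omega), List.getD_eq_getElem _ _ (by omega)]
    simp only [blockWeights, List.getElem_map, List.getElem_range]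
    exact if_congr (by omega) rfl rfl
  have hPlen := List.length_pos_iff.mpr hP
  have hinner : ∑ᶠ p ∈ Occ C P, (blockWeights P.length C c ++ W).getD (p - 1) 0 =
      c * (Occ C P).ncard := by
    rw [← finsum_one, mul_finsum_mem, mul_one]
    refine finsum_mem_congr rfl fun p hp => ?_
    have hb := Occ_bounds hP hp
    rw [hblock p hb.1 (by omega), if_pos hb.2]
  have hcross :
      ∑ᶠ p ∈ crossingOcc C D P, (blockWeights P.length C c ++ W).getD (p - 1) 0 = 0 := by
    refine finsum_mem_eq_zero_of_forall_eq_zero fun p hp => ?_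
    rw [hblock p (Occ_bounds hP hp.1).1 hp.2.1, if_neg (by have := hp.2.2; omega)]
  have hright : ∀ p ∈ Occ D P,
      (blockWeights P.length C c ++ W).getD (p + C.length - 1) 0 = W.getD (p - 1) 0 := by
    intro p hp
    have := (Occ_bounds hP hp).1
    rw [List.getD_append_right _ _ _ _ (by omega), hlen]
    congr 1
    omega
  rw [finsum_mem_Occ_append hP, hinner, hcross, add_zero, finsum_mem_congr rfl hright]

lemma finsum_mem_Occ_flatten {ι : Type*} (hP : P ≠ []) (l : List ι) (t : ι → List α)
    (c : ι → ℕ) :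
    ∑ᶠ p ∈ Occ (l.map t).flatten P,
        ((l.map fun i => blockWeights P.length (t i) (c i)).flatten).getD (p - 1) 0 =
      (l.map fun i => c i * (Occ (t i) P).ncard).sum := by
  induction l with
  | nil =>
    rw [List.map_nil, List.flatten_nil, Occ_eq_empty_of_length_lt (T := [])
      (List.length_pos_iff.mpr hP), finsum_mem_empty, List.map_nil, List.sum_nil]
  | cons i l ih =>
    simp only [List.map_cons, List.flatten_cons, List.sum_cons]
    rw [finsum_mem_Occ_append_blockWeights hP, ih]

end WeightedBlocks

namespace SLP

variable {α : Type*} {n : ℕ} (S : SLP α n)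

lemma val_of_rule_inl {i : Fin n} {a : α} (h : S.rule i = .inl a) : S.val i = [a] := by
  rw [val]; split <;> simp_all

lemma val_of_rule_inr {i l r : Fin n} (h : S.rule i = .inr (l, r)) :
    S.val i = S.val l ++ S.val r := by
  rw [val]; split <;> simp_all

lemma length_val_pos (i : Fin n) : 0 < (S.val i).length := by
  rcases h : S.rule i with a | ⟨l, r⟩
  · simp [S.val_of_rule_inl h]
  · have := length_val_pos l
    rw [S.val_of_rule_inr h, List.length_append]
    omega
termination_by i.val
decreasing_by exact (S.wf i l r h).1

/-- `S.NodeAt i k u`: the derivation tree of `X_i` has a node labelled `X_k` deriving the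
substring of `val(X_i)` that starts at position `u` (1-indexed). -/
inductive NodeAt (S : SLP α n) (i : Fin n) : Fin n → ℕ → Prop
  | refl : NodeAt S i i 1
  | left {k l r : Fin n} {u : ℕ} :
      NodeAt S i k u → S.rule k = .inr (l, r) → NodeAt S i l u
  | right {k l r : Fin n} {u : ℕ} :
      NodeAt S i k u → S.rule k = .inr (l, r) → NodeAt S i r (u + (S.val l).length)

variable {S} {i j k : Fin n} {u v : ℕ}

lemma NodeAt.one_le (h : S.NodeAt i k u) : 1 ≤ u := by
  induction h <;> omega

lemma NodeAt.le (h : S.NodeAt i k u) : k ≤ i := by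
  induction h with
  | refl => exact le_rfl
  | left _ hrule ih => exact (S.wf _ _ _ hrule).1.le.trans ih
  | right _ hrule ih => exact (S.wf _ _ _ hrule).2.le.trans ih

lemma NodeAt.add_length_le (h : S.NodeAt i k u) :
    u + (S.val k).length ≤ (S.val i).length + 1 := by
  induction h with
  | refl => omega
  | left _ hrule ih => rw [S.val_of_rule_inr hrule, List.length_append] at ih; omega
  | right _ hrule ih => rw [S.val_of_rule_inr hrule, List.length_append] at ih; omega

lemma NodeAt.trans (hij : S.NodeAt i j v) (hjk : S.NodeAt j k u) :
    S.NodeAt i k (v + u - 1) := by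
  induction hjk with
  | refl => simpa using hij
  | left _ hrule ih => exact ih.left hrule
  | @right _ l _ u' hk hrule ih =>
    have := hk.one_le
    rw [show v + (u' + (S.val l).length) - 1 = v + u' - 1 + (S.val l).length by omega]
    exact ih.right hrule

lemma nodeAt_self_iff : S.NodeAt i i u ↔ u = 1 := by
  refine ⟨fun h => ?_, fun h => h ▸ .refl⟩
  cases h with
  | refl => rfl
  | left hk hrule => exact absurd ((S.wf _ _ _ hrule).1.trans_le hk.le) (lt_irrefl _)
  | right hk hrule => exact absurd ((S.wf _ _ _ hrule).2.trans_le hk.le) (lt_irrefl _)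

lemma nodeAt_iff_of_rule_inl {a : α} (h : S.rule i = .inl a) :
    S.NodeAt i k u ↔ k = i ∧ u = 1 := by
  refine ⟨fun hk => ?_, fun ⟨hki, hu⟩ => hki ▸ hu ▸ .refl⟩
  induction hk with
  | refl => exact ⟨rfl, rfl⟩
  | left _ hrule ih => obtain ⟨rfl, -⟩ := ih; simp [h] at hrule
  | right _ hrule ih => obtain ⟨rfl, -⟩ := ih; simp [h] at hrule

lemma nodeAt_iff_of_rule_inr {l r : Fin n} (h : S.rule i = .inr (l, r)) :
    S.NodeAt i k u ↔
      (k = i ∧ u = 1) ∨ S.NodeAt l k u ∨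
        ∃ v, S.NodeAt r k v ∧ v + (S.val l).length = u := by
  constructor
  · intro hk
    induction hk with
    | refl => exact .inl ⟨rfl, rfl⟩
    | @left _ l' r' _ _ hrule ih =>
      rcases ih with ⟨rfl, rfl⟩ | hl | ⟨v, hr, rfl⟩
      · obtain ⟨rfl, rfl⟩ : l = l' ∧ r = r' := by simpa [h] using hrule
        exact .inr (.inl .refl)
      · exact .inr (.inl (hl.left hrule))
      · exact .inr (.inr ⟨v, hr.left hrule, rfl⟩)
    | @right _ l' r' _ _ hrule ih =>
      rcases ih with ⟨rfl, rfl⟩ | hl | ⟨v, hr, rfl⟩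
      · obtain ⟨rfl, rfl⟩ : l = l' ∧ r = r' := by simpa [h] using hrule
        exact .inr (.inr ⟨1, .refl, by omega⟩)
      · exact .inr (.inl (hl.right hrule))
      · exact .inr (.inr ⟨_, hr.right hrule, by omega⟩)
  · rintro (⟨rfl, rfl⟩ | hl | ⟨v, hr, rfl⟩)
    · exact .refl
    · simpa using ((NodeAt.refl (S := S)).left h).trans hl
    · have := hr.one_le
      convert ((NodeAt.refl (S := S)).right h).trans hr using 1
      omega

variable (S)

noncomputable def nodeCount (i k : Fin n) : ℕ := {u | S.NodeAt i k u}.ncard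

lemma finite_setOf_nodeAt (i k : Fin n) : {u | S.NodeAt i k u}.Finite :=
  (Set.finite_Icc 1 (S.val i).length).subset fun u hu => by
    have := hu.add_length_le
    have := S.length_val_pos k
    exact ⟨hu.one_le, by omega⟩

lemma nodeCount_of_rule_inl {a : α} (h : S.rule i = .inl a) (k : Fin n) :
    S.nodeCount i k = if k = i then 1 else 0 := by
  simp only [nodeCount, nodeAt_iff_of_rule_inl h]
  split_ifs with hk <;> simp [hk]

lemma nodeCount_of_rule_inr {l r : Fin n} (h : S.rule i = .inr (l, r)) (k : Fin n) :
    S.nodeCount i k = (if k = i then 1 else 0) + S.nodeCount l k + S.nodeCount r k := by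
  have hunion : {u | S.NodeAt i k u} =
      ({u | k = i ∧ u = 1} ∪ {u | S.NodeAt l k u}) ∪
        (· + (S.val l).length) '' {u | S.NodeAt r k u} := by
    ext u
    simp only [nodeAt_iff_of_rule_inr h, Set.mem_union, Set.mem_ofPred_eq, Set.mem_image, or_assoc]
  have hdisj_left : Disjoint {u | k = i ∧ u = 1} {u | S.NodeAt l k u} :=
    Set.disjoint_left.mpr fun u ⟨hki, _⟩ hl =>
      (hki ▸ hl.le).not_gt (S.wf _ _ _ h).1
  have hdisj_right : Disjoint ({u | k = i ∧ u = 1} ∪ {u | S.NodeAt l k u})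
      ((· + (S.val l).length) '' {u | S.NodeAt r k u}) := by
    refine Set.disjoint_left.mpr fun u hu ⟨v, hv, hvu⟩ => ?_
    dsimp only at hvu
    have := hv.one_le
    rcases hu with ⟨rfl, rfl⟩ | hl
    · have := S.length_val_pos l; omega
    · have := hl.add_length_le; have := S.length_val_pos k; omega
  have hsingle : {u | k = i ∧ u = 1}.ncard = if k = i then 1 else 0 := by
    split_ifs with hk <;> simp [hk]
  have hsingle_finite : {u | k = i ∧ u = 1}.Finite :=
    (Set.finite_singleton 1).subset fun u hu => hu.2
  rw [nodeCount, hunion, Set.ncard_union_eq hdisj_right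
      (hsingle_finite.union (S.finite_setOf_nodeAt l k)) ((S.finite_setOf_nodeAt r k).image _),
    Set.ncard_union_eq hdisj_left hsingle_finite (S.finite_setOf_nodeAt l k),
    Set.ncard_image_of_injective _ (add_left_injective _), hsingle, nodeCount, nodeCount]

theorem ncard_Occ_val {P : List α} (hP : 2 ≤ P.length) (i : Fin n) :
    (Occ (S.val i) P).ncard = ∑ k, S.nodeCount i k * (Occ (S.tstr P.length k) P).ncard := by
  have hPne := List.ne_nil_of_length_pos (by omega : 0 < P.length)
  rcases h : S.rule i with a | ⟨l, r⟩
  · have htstr : S.tstr P.length i = [] := by rw [tstr, h]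
    have hnil : Occ [] P = ∅ := Occ_eq_empty_of_length_lt (List.length_pos_iff.mpr hPne)
    rw [S.val_of_rule_inl h,
      Occ_eq_empty_of_length_lt (by simp only [List.length_singleton]; omega)]
    simp [S.nodeCount_of_rule_inl h, htstr, hnil]
  · have htstr : S.tstr P.length i =
        suf (S.val l) (P.length - 1) ++ pre (S.val r) (P.length - 1) := by
      rw [tstr, h]
    rw [S.val_of_rule_inr h, ncard_Occ_append hPne, ncard_Occ_val hP l, ncard_Occ_val hP r]
    simp only [S.nodeCount_of_rule_inr h, add_mul, Finset.sum_add_distrib, ite_mul, one_mul,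
      zero_mul, Finset.sum_ite_eq', Finset.mem_univ, if_true, htstr]
    ring
termination_by i.val
decreasing_by
  · exact (S.wf i l r h).1
  · exact (S.wf i l r h).2

lemma mem_itv_iff {top : Fin n} (htop : top.val = n - 1) (k : Fin n) (p : ℕ × ℕ) :
    p ∈ S.itv k ↔ ∃ u, S.NodeAt top k u ∧ p = (u, u + (S.val k).length - 1) := by
  have ih : ∀ k', k < k' → ∀ p,
      p ∈ S.itv k' ↔ ∃ u, S.NodeAt top k' u ∧ p = (u, u + (S.val k').length - 1) :=
    fun k' _ p => mem_itv_iff htop k' p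
  rw [itv]
  split_ifs with hk
  · obtain rfl : k = top := Fin.ext (hk.trans htop.symm)
    simp [nodeAt_self_iff]
  · have hne : k ≠ top := fun h => hk (h ▸ htop)
    simp only [Set.mem_union, Set.mem_ofPred_eq]
    constructor
    · rintro (⟨k', l, hrule, uv, huv, rfl⟩ | ⟨k', r, hrule, uv, huv, rfl⟩)
      · obtain ⟨u, hu, rfl⟩ := (ih k' (S.wf _ _ _ hrule).2 uv).mp huv
        refine ⟨u + (S.val l).length, hu.right hrule, ?_⟩
        rw [S.val_of_rule_inr hrule, List.length_append]
        grind
      · obtain ⟨u, hu, rfl⟩ := (ih k' (S.wf _ _ _ hrule).1 uv).mp huv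
        exact ⟨u, hu.left hrule, rfl⟩
    · rintro ⟨u, hu, rfl⟩
      cases hu with
      | refl => exact absurd rfl hne
      | left hk' hrule =>
        exact .inr ⟨_, _, hrule, _, (ih _ (S.wf _ _ _ hrule).1 _).mpr ⟨_, hk', rfl⟩, rfl⟩
      | right hk' hrule =>
        refine .inl ⟨_, _, hrule, _, (ih _ (S.wf _ _ _ hrule).2 _).mpr ⟨_, hk', rfl⟩, ?_⟩
        rw [S.val_of_rule_inr hrule, List.length_append]
        grind
termination_by n - k.val
decreasing_by omega

lemma vOcc_eq_nodeCount {top : Fin n} (htop : top.val = n - 1) (k : Fin n) :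
    S.vOcc k = S.nodeCount top k := by
  have : S.itv k = (fun u => (u, u + (S.val k).length - 1)) '' {u | S.NodeAt top k u} := by
    ext p
    simp only [S.mem_itv_iff htop, Set.mem_image, Set.mem_ofPred_eq, eq_comm]
  rw [vOcc, this, Set.ncard_image_of_injective _ fun u v huv => (Prod.ext_iff.mp huv).1, nodeCount]

lemma length_tstr_lt_of_not_mem_idxs {q : ℕ} (hq : 1 ≤ q) {k : Fin n} (hk : k ∉ S.idxs q) :
    (S.tstr q k).length < q := by
  simp only [idxs, List.mem_filter, List.mem_finRange, true_and, Bool.and_eq_true,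
    decide_eq_true_eq, not_and, not_le] at hk
  rcases h : S.rule k with a | ⟨l, r⟩
  · simp only [tstr, h, List.length_nil]
    omega
  · have hlen := hk (by simp [h])
    rw [S.val_of_rule_inr h, List.length_append] at hlen
    simp only [tstr, h, suf, pre, List.length_append, List.length_drop, List.length_take]
    omega

lemma sum_map_idxs {M : Type*} [AddCommMonoid M] (q : ℕ) (f : Fin n → M)
    (hf : ∀ k ∉ S.idxs q, f k = 0) : ((S.idxs q).map f).sum = ∑ k, f k := by
  rw [← List.sum_toFinset f (l := S.idxs q) ((List.nodup_finRange n).filter _)]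
  exact Finset.sum_subset (Finset.subset_univ _) fun k _ hk => hf k (by simpa using hk)

end SLP

/-- correctness of the reduction to a single weighted string: for `q ≥ 2`
and every `q`-gram `P`, `|Occ(T, P)| = Σ_{k ∈ Occ(z, P)} w(k)`. -/
theorem slp_weighted_reduction {α : Type*} {n : ℕ} (S : SLP α n) (hn : 0 < n)
    (q : ℕ) (hq : 2 ≤ q) (P : List α) (hP : P.length = q) :
    (Occ (S.val ⟨n - 1, Nat.sub_lt hn one_pos⟩) P).ncard =
      ∑ᶠ k ∈ Occ (S.zstr q) P, S.wfun q k := by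
  subst hP
  have hPne : P ≠ [] := List.ne_nil_of_length_pos (by omega)
  -- `zstr` and `wlist` unfold to the flattened blocks `t_i` and `blockWeights _ t_i (vOcc i)`.
  have hz : ∑ᶠ k ∈ Occ (S.zstr P.length) P, S.wfun P.length k =
      ((S.idxs P.length).map fun k => S.vOcc k * (Occ (S.tstr P.length k) P).ncard).sum :=
    finsum_mem_Occ_flatten hPne (S.idxs P.length) (S.tstr P.length) S.vOcc
  rw [hz, S.ncard_Occ_val hq, S.sum_map_idxs]
  · simp only [S.vOcc_eq_nodeCount (top := ⟨n - 1, Nat.sub_lt hn one_pos⟩) rfl]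
  · intro k hk
    rw [Occ_eq_empty_of_length_lt (S.length_tstr_lt_of_not_mem_idxs (by omega) hk),
      Set.ncard_empty, mul_zero]
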